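/- arXiv:2605.13096 — 3 statements merged into one kernel-verified Lean document; each statement's English description precedes it below -/
import Mathlib

section
/- For nonnegative integers n_1, ..., n_ℓ with tail sums N_s = n_s + ... + n_ℓ, the total weight ∑_{s=1}^{ℓ} ∑_{j=1}^{n_s} (2n_1 + 4n_2 + ... + 2(s-1)n_{s-1} + 2sj) equals N_1² + N_2² + ... + N_ℓ² + N_1 + N_2 + ... + N_ℓ. -/
lemma cmpp_gauss (m s A : ℕ) :
    ∑ j ∈ Finset.Icc 1 m, (A + 2 * s * j) = m * A + s * (m * (m + 1)) := by
  induction m with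
  | zero => simp
  | succ m ih =>
    rw [Finset.sum_Icc_succ_top (by omega), ih]; ring

lemma cmpp_sumN (ℓ : ℕ) (n : ℕ → ℕ) :
    ∑ s ∈ Finset.Icc 1 ℓ, ∑ t ∈ Finset.Icc s ℓ, n t
      = ∑ t ∈ Finset.Icc 1 ℓ, t * n t := by
  induction ℓ with
  | zero => simp
  | succ ℓ ih =>
    rw [Finset.sum_Icc_succ_top (show 1 ≤ ℓ + 1 by omega),
        Finset.sum_Icc_succ_top (show 1 ≤ ℓ + 1 by omega)]
    have h : ∀ s ∈ Finset.Icc 1 ℓ, ∑ t ∈ Finset.Icc s (ℓ + 1), n t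
        = (∑ t ∈ Finset.Icc s ℓ, n t) + n (ℓ + 1) := by
      intro s hs
      exact Finset.sum_Icc_succ_top (le_trans (Finset.mem_Icc.mp hs).2 (Nat.le_succ ℓ)) n
    rw [Finset.sum_congr rfl h, Finset.sum_add_distrib, ih, Finset.sum_const,
        Nat.card_Icc, Finset.Icc_self, Finset.sum_singleton, smul_eq_mul]
    simp only [Nat.add_sub_cancel]
    ring

lemma cmpp_main (ℓ : ℕ) (n : ℕ → ℕ) :
    ∑ s ∈ Finset.Icc 1 ℓ, ∑ j ∈ Finset.Icc 1 (n s),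
        ((∑ t ∈ Finset.Ico 1 s, 2 * t * n t) + 2 * s * j)
      = ∑ s ∈ Finset.Icc 1 ℓ,
          ((∑ t ∈ Finset.Icc s ℓ, n t) ^ 2 + ∑ t ∈ Finset.Icc s ℓ, n t) := by
  induction ℓ with
  | zero => simp
  | succ ℓ ih =>
    have hR : ∀ s ∈ Finset.Icc 1 ℓ,
        ((∑ t ∈ Finset.Icc s (ℓ + 1), n t) ^ 2 + ∑ t ∈ Finset.Icc s (ℓ + 1), n t)
          = ((∑ t ∈ Finset.Icc s ℓ, n t) ^ 2 + ∑ t ∈ Finset.Icc s ℓ, n t)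
            + ((2 * n (ℓ + 1)) * (∑ t ∈ Finset.Icc s ℓ, n t)
                + (n (ℓ + 1) ^ 2 + n (ℓ + 1))) := by
      intro s hs
      rw [Finset.sum_Icc_succ_top (le_trans (Finset.mem_Icc.mp hs).2 (Nat.le_succ ℓ)) n]
      ring
    have hA : ∑ t ∈ Finset.Ico 1 (ℓ + 1), 2 * t * n t
        = 2 * ∑ t ∈ Finset.Icc 1 ℓ, t * n t := by
      rw [Finset.Ico_add_one_right_eq_Icc, Finset.mul_sum]
      exact Finset.sum_congr rfl fun t _ => by ring
    rw [Finset.sum_Icc_succ_top (show 1 ≤ ℓ + 1 by omega),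
        Finset.sum_Icc_succ_top (show 1 ≤ ℓ + 1 by omega),
        cmpp_gauss, hA, ih, Finset.sum_congr rfl hR]
    simp only [Finset.sum_add_distrib, Finset.Icc_self, Finset.sum_singleton,
        Finset.sum_const, Nat.card_Icc, smul_eq_mul, Nat.add_sub_cancel]
    rw [← Finset.mul_sum, cmpp_sumN]
    ring

/-- The weight of the base CMPP partition for `k₀ = 1`:
`∑_{s=1}^{ℓ} ∑_{j=1}^{n_s} (2n₁ + 4n₂ + ⋯ + 2(s-1)n_{s-1} + 2sj)
  = N₁² + ⋯ + N_ℓ² + N₁ + ⋯ + N_ℓ`. -/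
theorem cmpp_base_weight_k0 (ℓ : ℕ) (hℓ : 0 < ℓ) (n : ℕ → ℕ)
    (N : ℕ → ℕ) (hN : ∀ s, N s = ∑ t ∈ Finset.Icc s ℓ, n t) :
    ∑ s ∈ Finset.Icc 1 ℓ, ∑ j ∈ Finset.Icc 1 (n s),
        ((∑ t ∈ Finset.Ico 1 s, 2 * t * n t) + 2 * s * j)
      = (∑ s ∈ Finset.Icc 1 ℓ, (N s) ^ 2) + ∑ s ∈ Finset.Icc 1 ℓ, N s := by
  simp only [hN]
  rw [← Finset.sum_add_distrib]
  exact cmpp_main ℓ n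
end

section
/- The number of partitions of n into parts that pairwise differ by at least 2 and have exactly m parts equals the coefficient of z^m q^n in ∑_{N ≥ 0} q^{N²} z^N / ((1−q)(1−q²)···(1−q^N)). -/
open PowerSeries

/-- Parts of the partition pairwise differ by at least 2. -/
def PairwiseGapTwo {n : ℕ} (p : n.Partition) : Prop :=
  p.parts.Nodup ∧ ∀ a ∈ p.parts, ∀ b ∈ p.parts, a ≠ b → 2 ≤ max a b - min a b

/-!
Listing the parts of a gap-two partition with `m` parts increasingly as
`λᵢ = 2i + 1 + e₀ + ⋯ + eᵢ` (`0 ≤ i < m`) identifies these partitions of `n` bijectively with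
the sequences `e ∈ ℕᵐ` satisfying `m² + ∑ₖ (m - k) eₖ = n`. On the other side,
`1 / ∏_{j=1}^m (1 - q^j) = ∏_{j=1}^m ∑_t q^{jt}`, whose coefficient of `q^d` counts the solutions of
`∑ⱼ j cⱼ = d`; with `j = m - k` these are the same sequences.
-/

open Finset

theorem sum_range_two_mul_add_one (m : ℕ) : ∑ i ∈ range m, (2 * i + 1) = m ^ 2 := by
  induction m with
  | zero => rfl
  | succ m ih => rw [sum_range_succ, ih]; ring

theorem PairwiseGapTwo.add_two_le {n : ℕ} {p : n.Partition} (hp : PairwiseGapTwo p) {a b : ℕ}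
    (ha : a ∈ p.parts) (hb : b ∈ p.parts) (hab : a < b) : a + 2 ≤ b := by
  have := hp.2 a ha b hb hab.ne
  omega

namespace GapTwo

variable {m : ℕ}

/-- The least value the `i`-th part may take once the `(i - 1)`-th is `f (i - 1)`. -/
def floor (f : Fin m → ℕ) (i : Fin m) : ℕ :=
  if h : (i : ℕ) = 0 then 1 else f ⟨i - 1, by omega⟩ + 2

def ofExcess (e : Fin m → ℕ) (i : Fin m) : ℕ :=
  2 * i + 1 + ∑ k ∈ Iic i, e k

def excess (f : Fin m → ℕ) (i : Fin m) : ℕ :=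
  f i - floor f i

theorem ofExcess_eq_floor_add (e : Fin m → ℕ) (i : Fin m) :
    ofExcess e i = floor (ofExcess e) i + e i := by
  unfold floor
  split_ifs with hi
  · have : Iic i = {i} :=
      Finset.ext fun k => by simp only [mem_Iic, mem_singleton, Fin.le_def, Fin.ext_iff]; omega
    simp only [ofExcess, this, sum_singleton, hi]
  · have : Iic i = insert i (Iic ⟨i - 1, by omega⟩) :=
      Finset.ext fun k => by simp only [mem_Iic, mem_insert, Fin.le_def, Fin.ext_iff]; omega
    rw [ofExcess, ofExcess, this, sum_insert (by simp [Fin.le_def]; omega)]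
    simp only
    omega

theorem excess_ofExcess (e : Fin m → ℕ) : excess (ofExcess e) = e := by
  ext i
  have := ofExcess_eq_floor_add e i
  rw [excess]
  omega

theorem ofExcess_excess {f : Fin m → ℕ} (hf : ∀ i, floor f i ≤ f i) :
    ofExcess (excess f) = f := by
  suffices ∀ t (i : Fin m), (i : ℕ) = t → ofExcess (excess f) i = f i from
    funext fun i => this i i rfl
  intro t
  induction t with
  | zero =>
    intro i hi
    have := hf i
    rw [ofExcess_eq_floor_add, excess]
    simp only [floor, hi, dite_true] at this ⊢
    omega
  | succ t ih =>
    intro i hi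
    have := hf i
    have hprev := ih ⟨i - 1, by omega⟩ (by simp; omega)
    rw [ofExcess_eq_floor_add, excess]
    simp only [floor, hi, Nat.succ_ne_zero, dite_false] at this hprev ⊢
    omega

theorem ofExcess_add_two_le (e : Fin m → ℕ) {i j : Fin m} (hij : i < j) :
    ofExcess e i + 2 ≤ ofExcess e j := by
  have : ∑ k ∈ Iic i, e k ≤ ∑ k ∈ Iic j, e k := sum_le_sum_of_subset (Iic_subset_Iic.2 hij.le)
  have : (i : ℕ) < j := hij
  simp only [ofExcess]
  omega

theorem strictMono_ofExcess (e : Fin m → ℕ) : StrictMono (ofExcess e) :=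
  fun _ _ hij => by have := ofExcess_add_two_le e hij; omega

theorem sum_ofExcess (e : Fin m → ℕ) : ∑ i, ofExcess e i = m ^ 2 + ∑ k, (m - k) * e k := by
  have hcount : ∑ i, ∑ k ∈ Iic i, e k = ∑ k, ∑ i ∈ Ici k, e k :=
    sum_comm' fun i k => by simp
  calc ∑ i, ofExcess e i = ∑ i : Fin m, (2 * (i : ℕ) + 1) + ∑ i, ∑ k ∈ Iic i, e k :=
        sum_add_distrib
    _ = m ^ 2 + ∑ k, (m - k) * e k := by
      rw [Fin.sum_univ_eq_sum_range (fun i => 2 * i + 1), sum_range_two_mul_add_one, hcount]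
      simp [Fin.card_Ici]

def partition {n : ℕ} (e : Fin m → ℕ) (he : m ^ 2 + ∑ k, (m - k) * e k = n) : n.Partition where
  parts := univ.val.map (ofExcess e)
  parts_pos := by simp [ofExcess]
  parts_sum := by rw [← he, ← sum_ofExcess]; rfl

theorem mem_partition_parts {n : ℕ} {e : Fin m → ℕ} {he : m ^ 2 + ∑ k, (m - k) * e k = n}
    {a : ℕ} : a ∈ (partition e he).parts ↔ a ∈ Set.range (ofExcess e) := by
  simp [partition]

theorem pairwiseGapTwo_partition {n : ℕ} (e : Fin m → ℕ) (he : m ^ 2 + ∑ k, (m - k) * e k = n) :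
    PairwiseGapTwo (partition e he) := by
  refine ⟨(univ.nodup.map (strictMono_ofExcess e).injective), ?_⟩
  simp only [mem_partition_parts, Set.mem_range]
  rintro _ ⟨i, rfl⟩ _ ⟨j, rfl⟩ hij
  rcases lt_or_gt_of_ne (ne_of_apply_ne _ hij) with h | h
  · have := ofExcess_add_two_le e h; omega
  · have := ofExcess_add_two_le e h; omega

theorem card_partition_parts {n : ℕ} (e : Fin m → ℕ) (he : m ^ 2 + ∑ k, (m - k) * e k = n) :
    Multiset.card (partition e he).parts = m := by
  simp [partition]

theorem partition_injective {n : ℕ} {e e' : Fin m → ℕ} {he : m ^ 2 + ∑ k, (m - k) * e k = n}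
    {he' : m ^ 2 + ∑ k, (m - k) * e' k = n} (h : partition e he = partition e' he') : e = e' := by
  have hrange : Set.range (ofExcess e) = Set.range (ofExcess e') := by
    ext a
    rw [← mem_partition_parts (he := he), h, mem_partition_parts]
  rw [← excess_ofExcess e, ← excess_ofExcess e',
    ((strictMono_ofExcess e).range_inj (strictMono_ofExcess e')).1 hrange]

theorem exists_partition_eq {n : ℕ} {p : n.Partition} (hp : PairwiseGapTwo p)
    (hm : Multiset.card p.parts = m) :
    ∃ (e : Fin m → ℕ) (he : m ^ 2 + ∑ k, (m - k) * e k = n), partition e he = p := by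
  have hS : p.parts.toFinset.card = m := by rw [Multiset.toFinset_card_of_nodup hp.1, hm]
  set f := p.parts.toFinset.orderEmbOfFin hS
  have hmem : ∀ a, a ∈ p.parts ↔ a ∈ Set.range f := by simp [f]
  have hfloor : ∀ i, floor f i ≤ f i := by
    intro i
    unfold floor
    split_ifs with hi
    · exact p.parts_pos ((hmem _).2 ⟨i, rfl⟩)
    · exact hp.add_two_le ((hmem _).2 ⟨_, rfl⟩) ((hmem _).2 ⟨i, rfl⟩)
        (f.strictMono (Fin.lt_def.2 (by simp only; omega)))
  have hparts : univ.val.map (ofExcess (excess f)) = p.parts := by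
    rw [ofExcess_excess hfloor]
    refine (Multiset.Nodup.ext (univ.nodup.map f.injective) hp.1).2 fun a => ?_
    simp [hmem]
  have he : m ^ 2 + ∑ k, (m - k) * excess f k = n := by
    rw [← sum_ofExcess, ← p.parts_sum, ← hparts]
    rfl
  exact ⟨excess f, he, Nat.Partition.ext hparts⟩

theorem card_pairwiseGapTwo (m n : ℕ) :
    Nat.card {p : n.Partition // PairwiseGapTwo p ∧ Multiset.card p.parts = m} =
      Nat.card {e : Fin m → ℕ // m ^ 2 + ∑ k, (m - k) * e k = n} := by
  refine (Nat.card_eq_of_bijective (fun e => ⟨partition e.1 e.2, pairwiseGapTwo_partition e.1 e.2,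
    card_partition_parts e.1 e.2⟩) ⟨?_, ?_⟩).symm
  · rintro ⟨e, he⟩ ⟨e', he'⟩ h
    exact Subtype.ext (partition_injective (he := he) (he' := he') (congrArg Subtype.val h))
  · rintro ⟨p, hp, hm⟩
    obtain ⟨e, he, rfl⟩ := exists_partition_eq hp hm
    exact ⟨⟨e, he⟩, rfl⟩

end GapTwo

theorem prod_Icc_one_eq_prod_fin_sub {M : Type*} [CommMonoid M] (f : ℕ → M) (m : ℕ) :
    ∏ j ∈ Icc 1 m, f j = ∏ k : Fin m, f (m - k) := by
  rw [Fin.prod_univ_eq_prod_range (fun k => f (m - k))]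
  refine prod_nbij' (m - ·) (m - ·) ?_ ?_ ?_ ?_
    fun a ha => by rw [Nat.sub_sub_self (mem_Icc.1 ha).2]
  all_goals intro a ha; simp only [mem_Icc, mem_range] at ha ⊢; omega

namespace PowerSeries

variable {K ι : Type*} [Field K] [Fintype ι]

theorem inv_prod_one_sub_X_pow (w : ι → ℕ) (hw : ∀ i, w i ≠ 0) :
    (∏ i, (1 - X ^ w i : K⟦X⟧))⁻¹ = ∏ i, expand (w i) (hw i) (mk 1) := by
  have hc : constantCoeff (∏ i, (1 - X ^ w i : K⟦X⟧)) ≠ 0 := by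
    simp [map_prod, hw]
  rw [PowerSeries.inv_eq_iff_mul_eq_one hc, ← prod_mul_distrib]
  refine prod_eq_one fun i _ => ?_
  rw [← expand_X (w i) (hw i), ← map_one (expand (w i) (hw i)), ← map_sub, ← map_mul,
    mk_one_mul_one_sub_eq_one, map_one]

theorem coeff_inv_prod_one_sub_X_pow (w : ι → ℕ) (hw : ∀ i, w i ≠ 0) (d : ℕ) :
    coeff d (∏ i, (1 - X ^ w i : K⟦X⟧))⁻¹ = Nat.card {e : ι → ℕ // ∑ i, w i * e i = d} := by
  classical
  let S := {l ∈ (univ : Finset ι).finsuppAntidiag d | ∀ i ∈ univ, w i ∣ l i}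
  have hS : {e : ι → ℕ // ∑ i, w i * e i = d} ≃ S :=
    { toFun e := ⟨Finsupp.equivFunOnFinite.symm fun i => w i * e.1 i, by
        simpa [S, mem_finsuppAntidiag] using e.2⟩
      invFun l := ⟨fun i => l.1 i / w i, by
        obtain ⟨hl, hdvd⟩ := mem_filter.1 l.2
        rw [← (mem_finsuppAntidiag.1 hl).1]
        exact sum_congr rfl fun i hi => Nat.mul_div_cancel' (hdvd i hi)⟩
      left_inv e := by ext i; simp [Nat.mul_div_cancel_left _ (Nat.pos_of_ne_zero (hw i))]
      right_inv l := by
        ext i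
        simp [Nat.mul_div_cancel' ((mem_filter.1 l.2).2 i (mem_univ i))] }
  rw [Nat.card_congr hS, Nat.card_eq_finsetCard, inv_prod_one_sub_X_pow w hw, coeff_prod]
  simp only [coeff_expand, coeff_mk, Pi.one_apply, prod_boole]
  convert sum_boole (R := K) _ _

end PowerSeries

/-- The coefficient of `z^m` in `∑_N q^{N²} z^N / (q;q)_N` is `q^{m²} / (q;q)_m`. -/
theorem firstRogersRamanujan_refined (m n : ℕ) :
    (Nat.card {p : n.Partition // PairwiseGapTwo p ∧ Multiset.card p.parts = m} : ℚ)
      = PowerSeries.coeff n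
          ((X : PowerSeries ℚ) ^ (m ^ 2)
            * (∏ j ∈ Finset.Icc 1 m, (1 - (X : PowerSeries ℚ) ^ j))⁻¹) := by
  rw [GapTwo.card_pairwiseGapTwo, coeff_X_pow_mul', prod_Icc_one_eq_prod_fin_sub]
  split_ifs with h
  · rw [coeff_inv_prod_one_sub_X_pow (fun k : Fin m => m - k) fun k => by omega]
    exact_mod_cast Nat.card_congr (Equiv.subtypeEquivRight fun e => by omega)
  · have : IsEmpty {e : Fin m → ℕ // m ^ 2 + ∑ k, (m - k) * e k = n} :=
      ⟨fun e => h (e.2 ▸ Nat.le_add_right _ _)⟩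
    simp
end

section
/- As formal power series in q, ∑_{n ≥ 0} q^{n²} / ((1−q²)(1−q⁴)···(1−q^{2n})) = ∏_{j ≥ 1} (1 + q^{2j−1}). -/
/-!
Cauchy's q-binomial theorem at `q = x²`, `z = x` expands `∏_{j=1}^{N} (1 + x^{2j-1})` as
`∑_n x^{n²} [N, n]_{x²}`. Since
`[N, n]_q (q;q)_n = (1 - q^N) ⋯ (1 - q^{N-n+1}) ≡ 1 mod q^{N-n+1}`,
the Gaussian binomial agrees with `1/(q;q)_n` up to order `q^{N-n+1}`. For `N = m + 1` the
resulting errors `x^{n² + 2(m+2-n)}` all lie beyond `x^m`.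
-/

open Finset PowerSeries

section CommSemiring

variable {R : Type*} [CommSemiring R]

def qBinomial (q : R) : ℕ → ℕ → R
  | _, 0 => 1
  | 0, _ + 1 => 0
  | N + 1, n + 1 => qBinomial q N (n + 1) + q ^ (N - n) * qBinomial q N n

@[simp]
theorem qBinomial_zero_right (q : R) (N : ℕ) : qBinomial q N 0 = 1 := by
  cases N <;> rfl

theorem qBinomial_succ_succ (q : R) (N n : ℕ) :
    qBinomial q (N + 1) (n + 1) = qBinomial q N (n + 1) + q ^ (N - n) * qBinomial q N n :=
  rfl

theorem qBinomial_eq_zero_of_lt (q : R) {N n : ℕ} (h : N < n) : qBinomial q N n = 0 := by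
  induction N generalizing n with
  | zero => obtain ⟨n, rfl⟩ := Nat.exists_eq_add_one_of_ne_zero h.ne'; rfl
  | succ N ih =>
    obtain ⟨n, rfl⟩ := Nat.exists_eq_add_one_of_ne_zero (Nat.ne_zero_of_lt h)
    rw [qBinomial_succ_succ, ih (by omega), ih (by omega), mul_zero, add_zero]

theorem Nat.succ_choose_two (n : ℕ) : (n + 1).choose 2 = n.choose 2 + n := by
  rw [Nat.choose_succ_succ', Nat.choose_one_right, add_comm]

/-- Cauchy's q-binomial theorem. -/
theorem prod_range_one_add_mul_pow (q z : R) (N : ℕ) :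
    ∏ j ∈ range N, (1 + z * q ^ j) =
      ∑ n ∈ range (N + 1), q ^ n.choose 2 * z ^ n * qBinomial q N n := by
  induction N with
  | zero => simp
  | succ N ih =>
    set a : ℕ → R := fun n => q ^ n.choose 2 * z ^ n * qBinomial q N n with ha
    have shift : ∑ n ∈ range (N + 1), a (n + 1) + 1 = ∑ n ∈ range (N + 1), a n := by
      have h0 : a 0 = 1 := by simp [ha]
      have hlast : a (N + 1) = 0 := by simp [ha, qBinomial_eq_zero_of_lt]
      rw [← h0, ← sum_range_succ', sum_range_succ, hlast, add_zero]
    have pascal : ∀ n ∈ range (N + 1),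
        q ^ (n + 1).choose 2 * z ^ (n + 1) * qBinomial q (N + 1) (n + 1) =
          a (n + 1) + z * q ^ N * a n := by
      intro n hn
      have hq : q ^ (n + 1).choose 2 * q ^ (N - n) = q ^ N * q ^ n.choose 2 := by
        rw [Nat.succ_choose_two, ← pow_add, ← pow_add]
        have := mem_range_succ_iff.mp hn
        congr 1
        omega
      calc _ = a (n + 1) + q ^ (n + 1).choose 2 * q ^ (N - n) * z ^ (n + 1) * qBinomial q N n := by
            rw [qBinomial_succ_succ]; ring
        _ = _ := by rw [hq]; ring
    rw [prod_range_succ, ih, sum_range_succ' _ (N + 1), sum_congr rfl pascal, sum_add_distrib,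
      ← mul_sum, ← shift]
    simp only [Nat.choose_zero_succ, pow_zero, qBinomial_zero_right, mul_one]
    ring

theorem Nat.two_mul_choose_two_add_self (n : ℕ) : 2 * n.choose 2 + n = n ^ 2 := by
  induction n with
  | zero => rfl
  | succ n ih => rw [Nat.succ_choose_two]; nlinarith

theorem prod_Icc_one_add_pow_odd (x : R) (N : ℕ) :
    ∏ j ∈ Icc 1 N, (1 + x ^ (2 * j - 1)) =
      ∑ n ∈ range (N + 1), x ^ (n ^ 2) * qBinomial (x ^ 2) N n := by
  rw [← Ico_add_one_right_eq_Icc, prod_Ico_eq_prod_range, Nat.add_sub_cancel]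
  convert prod_range_one_add_mul_pow (x ^ 2) x N using 1
  · refine prod_congr rfl fun j _ => ?_
    rw [← pow_mul, ← pow_succ']
    congr 2
    omega
  · refine sum_congr rfl fun n _ => ?_
    rw [← pow_mul, ← pow_add, Nat.two_mul_choose_two_add_self]

end CommSemiring

section CommRing

variable {R : Type*} [CommRing R]

theorem qBinomial_mul_prod_one_sub_pow (q : R) (N n : ℕ) :
    qBinomial q N n * ∏ j ∈ Icc 1 n, (1 - q ^ j) = ∏ j ∈ range n, (1 - q ^ (N - j)) := by
  induction N generalizing n with
  | zero => cases n <;> simp [qBinomial_eq_zero_of_lt]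
  | succ N ih =>
    cases n with
    | zero => simp
    | succ n =>
      rcases lt_or_ge N n with h | h
      · rw [qBinomial_eq_zero_of_lt q (by omega), zero_mul, eq_comm]
        exact prod_eq_zero (mem_range.2 (by omega : N + 1 < n + 1)) (by simp)
      set A := ∏ j ∈ range n, (1 - q ^ (N - j))
      have hsucc : ∏ j ∈ range (n + 1), (1 - q ^ (N + 1 - j)) = A * (1 - q ^ (N + 1)) := by
        simp only [prod_range_succ', Nat.add_sub_add_right, Nat.sub_zero, A]
      have ih_succ := ih (n + 1)
      rw [prod_Icc_succ_top (by omega), prod_range_succ] at ih_succ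
      have hpow : q ^ (N - n) * q ^ (n + 1) = q ^ (N + 1) := by
        rw [← pow_add]; congr 1; omega
      rw [qBinomial_succ_succ, prod_Icc_succ_top (by omega), hsucc]
      linear_combination ih_succ + q ^ (N - n) * (1 - q ^ (n + 1)) * ih n - A * hpow

theorem pow_dvd_one_sub_prod_one_sub_pow {ι : Type*} (a : R) (s : Finset ι) (e : ι → ℕ)
    {k : ℕ} (h : ∀ i ∈ s, k ≤ e i) : a ^ k ∣ 1 - ∏ i ∈ s, (1 - a ^ e i) := by
  refine prod_induction _ (fun x => a ^ k ∣ 1 - x) (fun x y hx hy => ?_) (by simp)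
    fun i hi => ?_
  · rw [show 1 - x * y = (1 - x) + x * (1 - y) by ring]
    exact dvd_add hx (hy.mul_left x)
  · simpa using pow_dvd_pow a (h i hi)

end CommRing

namespace PowerSeries

theorem coeff_eq_of_X_pow_dvd_sub {R : Type*} [CommRing R] {f g : R⟦X⟧} {m : ℕ}
    (h : X ^ (m + 1) ∣ f - g) : coeff m f = coeff m g := by
  rw [← sub_eq_zero, ← map_sub]
  exact X_pow_dvd_iff.mp h m (Nat.lt_succ_self m)

theorem pow_dvd_inv_prod_one_sub_pow_sub_qBinomial {k : Type*} [Field k] {q : k⟦X⟧}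
    (hq : constantCoeff q = 0) (N n : ℕ) :
    q ^ (N + 1 - n) ∣ (∏ j ∈ Icc 1 n, (1 - q ^ j))⁻¹ - qBinomial q N n := by
  set P := ∏ j ∈ Icc 1 n, (1 - q ^ j)
  have hP : constantCoeff P ≠ 0 := by
    rw [map_prod, prod_eq_one fun j hj => by
      simp [hq, Nat.one_le_iff_ne_zero.1 (mem_Icc.1 hj).1]]
    exact one_ne_zero
  have hG : qBinomial q N n = P⁻¹ * ∏ j ∈ range n, (1 - q ^ (N - j)) := by
    rw [← qBinomial_mul_prod_one_sub_pow, mul_comm _ P, ← mul_assoc,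
      PowerSeries.inv_mul_cancel _ hP, one_mul]
  rw [hG, ← mul_one_sub]
  exact (pow_dvd_one_sub_prod_one_sub_pow q _ _ fun j hj => by
    have := mem_range.1 hj; omega).mul_left _

end PowerSeries

/-- `∑_{n ≥ 0} q^{n²}/((1−q²)(1−q⁴)⋯(1−q^{2n})) = ∏_{j ≥ 1} (1 + q^{2j−1})`
as formal power series in `q`, stated coefficientwise: for every `m`, only the terms with
`n ≤ m` (resp. the factors with `2j−1 ≤ 2m+1`, i.e. `j ≤ m+1`) contribute to the coefficient
of `q^m`, and these truncations agree. -/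
theorem slater_distinct_odd_parts (m : ℕ) :
    PowerSeries.coeff (R := ℚ) m
        (∑ n ∈ Finset.range (m + 1),
          (X : PowerSeries ℚ) ^ (n ^ 2)
            * (∏ j ∈ Finset.Icc 1 n, (1 - (X : PowerSeries ℚ) ^ (2 * j)))⁻¹)
      = PowerSeries.coeff (R := ℚ) m
          (∏ j ∈ Finset.Icc 1 (m + 1), (1 + (X : PowerSeries ℚ) ^ (2 * j - 1))) := by
  rw [prod_Icc_one_add_pow_odd, sum_range_succ _ (m + 1)]
  simp only [pow_mul]
  refine coeff_eq_of_X_pow_dvd_sub ?_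
  rw [← sub_sub, ← sum_sub_distrib]
  refine dvd_sub (dvd_sum fun n hn => ?_) ((pow_dvd_pow X (by nlinarith)).mul_right _)
  have hexp : m + 1 ≤ n ^ 2 + 2 * (m + 1 + 1 - n) := by
    obtain ⟨d, rfl⟩ := Nat.exists_eq_add_of_le (mem_range_succ_iff.1 hn)
    rw [show n + d + 1 + 1 - n = d + 2 by omega]
    nlinarith
  have hdvd := pow_dvd_inv_prod_one_sub_pow_sub_qBinomial (q := (X : ℚ⟦X⟧) ^ 2) (by simp)
    (m + 1) n
  rw [← pow_mul] at hdvd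
  rw [← mul_sub]
  exact (pow_dvd_pow X hexp).trans (pow_add (X : ℚ⟦X⟧) _ _ ▸ mul_dvd_mul_left _ hdvd)
end
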